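/- arXiv:2007.01534 — 9 statements merged into one kernel-verified Lean document; each statement's English description precedes it below -/
import Mathlib

section
/- Fix p ∈ [1,2) and λ < 0, set T = −1/(λ(2−p)), and let a(t) = (1 + λ(2−p)t)^{1/(2−p)} for t ∈ [0,T]. For each integer N ≥ 2 define μ_N = (Σ_{k=1}^{N} a(kT/N) · a((k−1)T/N)) / (Σ_{k=1}^{N} a((k−1)T/N)²). Then μ_N > 0 for all N ≥ 2 and lim_{N→∞} (N/T) · log(μ_N) = λ(4−p)/2. -/
/-!
With `α = 1/(2-p)` and `λ(2-p)T = -1` the samples are `a((N-j)T/N) = (j/N)^α`, so, read backwards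
in time, `μ_N` is the least-squares ratio of the sequence `j ↦ j^α`. The identity
`2(v² - uv) = (v² - u²) + (v - u)²` telescopes the defect to
`2(1 - μ_N) = (N^{2α} + R_N) / D_N`, where `D_N = ∑_{j ≤ N} j^{2α} ~ N^{2α+1}/(2α+1)` by comparison
with `∫ x^{2α}`, and `R_N = ∑ ((j+1)^α - j^α)² ≤ α N^{2α-1}` by Bernoulli's inequality.
Hence `N(μ_N - 1) → -(2α+1)/2`, the same holds for `N log μ_N` since `log x ~ x - 1` at `1`,
and `-(2α+1)/(2T) = λ(4-p)/2`.
-/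

open Filter Finset Topology

theorem Finset.two_mul_sum_range_sq_sub_mul {R : Type*} [CommRing R] (g : ℕ → R) (N : ℕ) :
    2 * ∑ j ∈ range N, (g (j + 1) ^ 2 - g j * g (j + 1)) =
      g N ^ 2 - g 0 ^ 2 + ∑ j ∈ range N, (g (j + 1) - g j) ^ 2 := by
  rw [← sum_range_sub (fun j => g j ^ 2), mul_sum, ← sum_add_distrib]
  exact sum_congr rfl fun j _ => by ring

theorem Real.rpow_add_one_sub_rpow_le {q x : ℝ} (hq : 1 ≤ q) (hx : 0 ≤ x) :
    (x + 1) ^ q - x ^ q ≤ q * (x + 1) ^ (q - 1) := by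
  have hx1 : 0 < x + 1 := by linarith
  have hinv : (x + 1)⁻¹ ≤ 1 := inv_le_one_of_one_le₀ (by linarith)
  have hB := mul_le_mul_of_nonneg_right
    (one_add_mul_self_le_rpow_one_add (by linarith : -1 ≤ -(x + 1)⁻¹) hq) (rpow_nonneg hx1.le q)
  have hprod : (1 + -(x + 1)⁻¹) * (x + 1) = x := by field_simp; ring
  have hlin : (1 + q * -(x + 1)⁻¹) * (x + 1) ^ q = (x + 1) ^ q - q * ((x + 1) ^ q / (x + 1)) := by
    ring
  rw [← mul_rpow (by linarith) hx1.le, hprod, hlin] at hB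
  rw [rpow_sub_one hx1.ne']
  linarith

theorem sum_range_sq_rpow_add_one_sub_rpow_le {α : ℝ} (hα : 1 ≤ α) (N : ℕ) :
    ∑ j ∈ range N, (((j : ℝ) + 1) ^ α - (j : ℝ) ^ α) ^ 2 ≤
      α * (N : ℝ) ^ (α - 1) * (N : ℝ) ^ α := by
  calc ∑ j ∈ range N, (((j : ℝ) + 1) ^ α - (j : ℝ) ^ α) ^ 2
      ≤ ∑ j ∈ range N, α * (N : ℝ) ^ (α - 1) * (((j : ℝ) + 1) ^ α - (j : ℝ) ^ α) := by
        refine sum_le_sum fun j hj => ?_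
        have hjN : (j : ℝ) + 1 ≤ N := by exact_mod_cast mem_range.1 hj
        have hd : 0 ≤ ((j : ℝ) + 1) ^ α - (j : ℝ) ^ α :=
          sub_nonneg.2 (Real.rpow_le_rpow j.cast_nonneg (by linarith) (by linarith))
        have hdN : ((j : ℝ) + 1) ^ α - (j : ℝ) ^ α ≤ α * (N : ℝ) ^ (α - 1) :=
          (Real.rpow_add_one_sub_rpow_le hα j.cast_nonneg).trans <|
            mul_le_mul_of_nonneg_left (Real.rpow_le_rpow (by positivity) hjN (by linarith))
              (by linarith)
        rw [sq]
        exact mul_le_mul_of_nonneg_right hdN hd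
    _ = α * (N : ℝ) ^ (α - 1) * (N : ℝ) ^ α := by
        have htel := sum_range_sub (fun j : ℕ => (j : ℝ) ^ α) N
        push_cast at htel
        rw [← mul_sum, htel, Real.zero_rpow (by linarith), sub_zero]

theorem tendsto_sum_range_sq_rpow_add_one_sub_rpow_div {α : ℝ} (hα : 1 ≤ α) :
    Tendsto (fun N : ℕ => (∑ j ∈ range N, (((j : ℝ) + 1) ^ α - (j : ℝ) ^ α) ^ 2) /
      ((N : ℝ) ^ α) ^ 2) atTop (𝓝 0) := by
  refine tendsto_of_tendsto_of_tendsto_of_le_of_le' tendsto_const_nhds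
    (by simpa using tendsto_one_div_atTop_nhds_zero_nat.const_mul α) ?_ ?_ <;>
    filter_upwards [eventually_gt_atTop 0] with N hN
  · positivity
  · have hN' : (0 : ℝ) < N := by exact_mod_cast hN
    rw [div_le_iff₀ (by positivity)]
    calc _ ≤ α * (N : ℝ) ^ (α - 1) * (N : ℝ) ^ α := sum_range_sq_rpow_add_one_sub_rpow_le hα N
      _ = α * (N : ℝ)⁻¹ * ((N : ℝ) ^ α) ^ 2 := by rw [Real.rpow_sub_one hN'.ne']; ring

theorem tendsto_sum_range_rpow_div_rpow {q : ℝ} (hq : 0 ≤ q) :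
    Tendsto (fun N : ℕ => (∑ j ∈ range N, ((j : ℝ) + 1) ^ q) / (N : ℝ) ^ (q + 1)) atTop
      (𝓝 (1 / (q + 1))) := by
  have hq1 : 0 < q + 1 := by linarith
  have hmono : MonotoneOn (fun x : ℝ => x ^ q) (Set.Ici 0) :=
    fun x hx y _ hxy => Real.rpow_le_rpow hx hxy hq
  have lower (N : ℕ) : (N : ℝ) ^ (q + 1) / (q + 1) ≤ ∑ j ∈ range N, ((j : ℝ) + 1) ^ q := by
    have := (hmono.mono Set.Icc_subset_Ici_self).integral_le_sum (x₀ := 0) (a := N)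
    simpa [integral_rpow (Or.inl (by linarith : -1 < q)), Real.zero_rpow hq1.ne', add_comm]
      using this
  have upper (N : ℕ) : ∑ j ∈ range N, ((j : ℝ) + 1) ^ q ≤ ((N : ℝ) + 1) ^ (q + 1) / (q + 1) := by
    have := (hmono.mono fun x hx => le_trans zero_le_one hx.1).sum_le_integral (x₀ := 1) (a := N)
    rw [integral_rpow (Or.inl (by linarith : -1 < q)), Real.one_rpow] at this
    calc _ ≤ (((1 : ℝ) + N) ^ (q + 1) - 1) / (q + 1) := by simpa [add_comm] using this
      _ ≤ _ := by rw [add_comm]; gcongr; linarith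
  have hlim : Tendsto (fun N : ℕ => (1 + 1 / (N : ℝ)) ^ (q + 1) / (q + 1)) atTop
      (𝓝 (1 / (q + 1))) := by
    simpa using (((tendsto_const_nhds (x := (1 : ℝ))).add
      tendsto_one_div_atTop_nhds_zero_nat).rpow_const (Or.inr hq1.le)).div_const (q + 1)
  refine tendsto_of_tendsto_of_tendsto_of_le_of_le' tendsto_const_nhds hlim ?_ ?_ <;>
    filter_upwards [eventually_gt_atTop 0] with N hN
  · have hNq : (0 : ℝ) < (N : ℝ) ^ (q + 1) := by positivity
    rw [le_div_iff₀ hNq, one_div_mul_eq_div]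
    exact lower N
  · have hN' : (0 : ℝ) < N := by exact_mod_cast hN
    rw [one_add_div hN'.ne', Real.div_rpow (by positivity) hN'.le, div_right_comm]
    exact div_le_div_of_nonneg_right (upper N) (by positivity)

/-- The least-squares `μ` minimising `∑ j < N, (g j - μ * g (j + 1)) ^ 2`. For `g j` the sample
at time `(N - j) T / N` it is the DMD eigenvalue `μ_N`. -/
def lsqRatio {𝕜 : Type*} [Field 𝕜] (g : ℕ → 𝕜) (N : ℕ) : 𝕜 :=
  (∑ j ∈ range N, g j * g (j + 1)) / ∑ j ∈ range N, g (j + 1) ^ 2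

theorem lsqRatio_div_const {𝕜 : Type*} [Field 𝕜] (g : ℕ → 𝕜) (N : ℕ) {c : 𝕜} (hc : c ≠ 0) :
    lsqRatio (fun j => g j / c) N = lsqRatio g N := by
  have hterm (j : ℕ) : g j / c * (g (j + 1) / c) = g j * g (j + 1) / c ^ 2 := by ring
  simp only [lsqRatio, hterm, div_pow, ← sum_div]
  exact div_div_div_cancel_right₀ (pow_ne_zero 2 hc) _ _

theorem two_mul_one_sub_lsqRatio {𝕜 : Type*} [Field 𝕜] (g : ℕ → 𝕜) (N : ℕ)
    (hD : ∑ j ∈ range N, g (j + 1) ^ 2 ≠ 0) :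
    2 * (1 - lsqRatio g N) =
      (g N ^ 2 - g 0 ^ 2 + ∑ j ∈ range N, (g (j + 1) - g j) ^ 2) /
        ∑ j ∈ range N, g (j + 1) ^ 2 := by
  rw [← two_mul_sum_range_sq_sub_mul, lsqRatio, one_sub_div hD, mul_div_assoc, sum_sub_distrib]

theorem lsqRatio_rpow_pos (α : ℝ) {N : ℕ} (hN : 2 ≤ N) :
    0 < lsqRatio (fun j : ℕ => (j : ℝ) ^ α) N := by
  refine div_pos (sum_pos' (fun j _ => by positivity) ⟨1, mem_range.2 hN, ?_⟩)
    (sum_pos (fun j _ => by positivity) ⟨0, mem_range.2 (by omega)⟩)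
  simp only [Nat.cast_one, Real.one_rpow, one_mul]
  positivity

theorem tendsto_mul_one_sub_lsqRatio_rpow {α : ℝ} (hα : 1 ≤ α) :
    Tendsto (fun N : ℕ => (N : ℝ) * (1 - lsqRatio (fun j : ℕ => (j : ℝ) ^ α) N)) atTop
      (𝓝 ((2 * α + 1) / 2)) := by
  set D : ℕ → ℝ := fun N => ∑ j ∈ range N, (((j : ℝ) + 1) ^ α) ^ 2
  set R : ℕ → ℝ := fun N => ∑ j ∈ range N, (((j : ℝ) + 1) ^ α - (j : ℝ) ^ α) ^ 2
  have hD : Tendsto (fun N : ℕ => D N / (N : ℝ) ^ (2 * α + 1)) atTop (𝓝 (1 / (2 * α + 1))) := by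
    refine (tendsto_sum_range_rpow_div_rpow (by linarith : 0 ≤ 2 * α)).congr fun N => ?_
    congr 1
    refine sum_congr rfl fun j _ => ?_
    rw [← Real.rpow_natCast, ← Real.rpow_mul (by positivity), Nat.cast_ofNat, mul_comm]
  have hR : Tendsto (fun N : ℕ => R N / ((N : ℝ) ^ α) ^ 2) atTop (𝓝 0) :=
    tendsto_sum_range_sq_rpow_add_one_sub_rpow_div hα
  have hlim : Tendsto (fun N : ℕ => (1 + R N / ((N : ℝ) ^ α) ^ 2) /
      (2 * (D N / (N : ℝ) ^ (2 * α + 1)))) atTop (𝓝 ((2 * α + 1) / 2)) := by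
    rw [show (2 * α + 1) / 2 = (1 + 0) / (2 * (1 / (2 * α + 1))) by
      rw [add_zero]; field_simp]
    exact (tendsto_const_nhds.add hR).div (hD.const_mul 2) (by positivity)
  refine hlim.congr' ?_
  filter_upwards [eventually_gt_atTop 0] with N hN
  have hN' : (0 : ℝ) < N := by exact_mod_cast hN
  have hDpos : 0 < D N := sum_pos (fun j _ => by positivity) ⟨0, mem_range.2 hN⟩
  have h2 := two_mul_one_sub_lsqRatio (fun j : ℕ => (j : ℝ) ^ α) N (by
    simpa only [Nat.cast_add, Nat.cast_one] using hDpos.ne')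
  simp only [Nat.cast_add, Nat.cast_one, Nat.cast_zero, Real.zero_rpow (by linarith : α ≠ 0),
    zero_pow two_ne_zero, sub_zero] at h2
  have h1r : 1 - lsqRatio (fun j : ℕ => (j : ℝ) ^ α) N = (((N : ℝ) ^ α) ^ 2 + R N) / D N / 2 := by
    rw [← h2]; ring
  have hpow : (N : ℝ) ^ (2 * α + 1) = ((N : ℝ) ^ α) ^ 2 * N := by
    rw [sq, ← Real.rpow_add hN', ← Real.rpow_add_one hN'.ne', two_mul]
  rw [hpow, h1r]
  field_simp

theorem tendsto_mul_log_of_tendsto_mul_sub_one {x : ℕ → ℝ} {L : ℝ}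
    (h : Tendsto (fun N : ℕ => (N : ℝ) * (x N - 1)) atTop (𝓝 L)) :
    Tendsto (fun N : ℕ => (N : ℝ) * Real.log (x N)) atTop (𝓝 L) := by
  have hx : Tendsto x atTop (𝓝 1) := by
    have := (h.mul tendsto_one_div_atTop_nhds_zero_nat).add_const 1
    rw [mul_zero, zero_add] at this
    refine this.congr' ?_
    filter_upwards [eventually_gt_atTop 0] with N hN
    field_simp
    ring
  have hlower : Tendsto (fun N : ℕ => (N : ℝ) * (x N - 1) / x N) atTop (𝓝 L) := by
    have := h.div hx one_ne_zero
    rwa [div_one] at this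
  refine tendsto_of_tendsto_of_tendsto_of_le_of_le' hlower h ?_ ?_ <;>
    filter_upwards [hx.eventually_const_lt zero_lt_one] with N hN
  · rw [mul_div_assoc, sub_div, div_self hN.ne', one_div]
    exact mul_le_mul_of_nonneg_left (Real.one_sub_inv_le_log_of_pos hN) N.cast_nonneg
  · exact mul_le_mul_of_nonneg_left (Real.log_le_sub_one_of_pos hN) N.cast_nonneg

theorem Finset.sum_Icc_one_eq_sum_range_sub {M : Type*} [AddCommMonoid M] (F : ℝ → M) (N : ℕ) :
    ∑ k ∈ Icc 1 N, F k = ∑ j ∈ range N, F (N - j) := by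
  refine sum_nbij' (fun k => N - k) (fun j => N - j) ?_ ?_ ?_ ?_ ?_ <;>
    simp only [mem_Icc, mem_range] <;> intro k hk
  all_goals try omega
  rw [Nat.cast_sub hk.2, sub_sub_cancel]

theorem sum_Icc_div_sum_Icc_eq_lsqRatio_rpow {c T α : ℝ} (hcT : c * T = -1) {N : ℕ} (hN : 0 < N) :
    (∑ k ∈ Icc 1 N, (1 + c * ((k : ℝ) * T / N)) ^ α * (1 + c * (((k : ℝ) - 1) * T / N)) ^ α) /
      (∑ k ∈ Icc 1 N, ((1 + c * (((k : ℝ) - 1) * T / N)) ^ α) ^ 2) =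
      lsqRatio (fun j : ℕ => (j : ℝ) ^ α) N := by
  have hN' : (0 : ℝ) < N := by exact_mod_cast hN
  have hsample (x : ℝ) (hx : 0 ≤ x) :
      (1 + c * ((N - x) * T / N)) ^ α = x ^ α / (N : ℝ) ^ α := by
    rw [← Real.div_rpow hx hN'.le]
    congr 1
    field_simp
    linear_combination (N - x) * hcT
  rw [← lsqRatio_div_const _ N (Real.rpow_pos_of_pos hN' α).ne', lsqRatio,
    sum_Icc_one_eq_sum_range_sub
      (fun t => (1 + c * (t * T / N)) ^ α * (1 + c * ((t - 1) * T / N)) ^ α),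
    sum_Icc_one_eq_sum_range_sub (fun t => ((1 + c * ((t - 1) * T / N)) ^ α) ^ 2)]
  congr 1 <;> refine sum_congr rfl fun j _ => ?_ <;>
    simp only [sub_sub, Nat.cast_add, Nat.cast_one, hsample _ (by positivity : (0 : ℝ) ≤ j),
      hsample _ (by positivity : (0 : ℝ) ≤ j + 1)]

/-- For the decay profile `a(t) = (1+λ(2−p)t)^{1/(2−p)}` on `[0,T]`,
`T = −1/(λ(2−p))`, the discrete DMD eigenvalue `μ_N` obtained from `N`
uniform samples is positive, and the continuous-time DMD eigenvalue
`(N/T)·log μ_N` converges to `λ(4−p)/2` as `N → ∞`. -/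
theorem stmt1 (p lam T : ℝ) (hp1 : 1 ≤ p) (hp2 : p < 2) (hlam : lam < 0)
    (hT : T = -1 / (lam * (2 - p)))
    (a : ℝ → ℝ) (ha : ∀ t : ℝ, a t = (1 + lam * (2 - p) * t) ^ ((1 : ℝ) / (2 - p)))
    (μ : ℕ → ℝ)
    (hμ : ∀ N : ℕ, μ N =
      (∑ k ∈ Finset.Icc 1 N, a ((k : ℝ) * T / N) * a (((k : ℝ) - 1) * T / N)) /
      (∑ k ∈ Finset.Icc 1 N, (a (((k : ℝ) - 1) * T / N)) ^ 2)) :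
    (∀ N : ℕ, 2 ≤ N → 0 < μ N) ∧
    Tendsto (fun N : ℕ => ((N : ℝ) / T) * Real.log (μ N)) atTop
      (nhds (lam * (4 - p) / 2)) := by
  have h2p : 0 < 2 - p := by linarith
  set α := (1 : ℝ) / (2 - p) with hα_def
  have hα : 1 ≤ α := by rw [hα_def, le_div_iff₀ h2p]; linarith
  have hcT : lam * (2 - p) * T = -1 := by
    rw [hT, mul_div_cancel₀ _ (mul_neg_of_neg_of_pos hlam h2p).ne]
  have hμ_eq (N : ℕ) (hN : 0 < N) : μ N = lsqRatio (fun j : ℕ => (j : ℝ) ^ α) N := by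
    simp only [hμ, ha]
    exact sum_Icc_div_sum_Icc_eq_lsqRatio_rpow hcT hN
  refine ⟨fun N hN => hμ_eq N (by omega) ▸ lsqRatio_rpow_pos α hN, ?_⟩
  have hlog := tendsto_mul_log_of_tendsto_mul_sub_one
    (by simpa only [← mul_neg, neg_sub] using (tendsto_mul_one_sub_lsqRatio_rpow hα).neg)
  have hval : (1 / T) * -((2 * α + 1) / 2) = lam * (4 - p) / 2 := by
    rw [hT, hα_def]; field_simp; ring
  rw [← hval]
  refine (hlog.const_mul (1 / T)).congr' ?_
  filter_upwards [eventually_gt_atTop 0] with N hN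
  rw [hμ_eq N hN]
  ring
end

section
/- Fix p ∈ [1,2) and λ < 0, set T = −1/(λ(2−p)), and let a(t) = (1 + λ(2−p)t)^{1/(2−p)} for t ∈ [0,T]. For each integer N ≥ 2, writing a_k = a(kT/N) for k = 0,…,N, define ERR_N = Σ_{k=1}^{N} a_k² − (Σ_{k=1}^{N} a_k a_{k−1})² / (Σ_{k=1}^{N} a_{k−1}²). Then lim_{N→∞} ERR_N = 0. -/
open Filter Finset

/-
With `α = 1/(2-p) ≥ 1`, the samples are `a_k = (1 - k/N)^α`. The DMD error is the residual of the
best least-squares fit `a_k ≈ μ a_{k-1}`, so it is at most the residual of the fit with `μ = 1`,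
namely `Σ (a_{k-1} - a_k)²`. Since `x ↦ x^α` is `α`-Lipschitz on `[0,1]`, each increment is at most
`α/N`, and the `N` increments contribute at most `α²/N`.
-/

section LeastSquares

variable {ι : Type*} (s : Finset ι)

/-- The residual `min_μ Σ (y i - μ x i)²` of the least-squares fit of `y` by a multiple of `x`. -/
noncomputable def leastSquaresResidual (x y : ι → ℝ) : ℝ :=
  ∑ i ∈ s, y i ^ 2 - (∑ i ∈ s, y i * x i) ^ 2 / ∑ i ∈ s, x i ^ 2

theorem leastSquaresResidual_nonneg (x y : ι → ℝ) : 0 ≤ leastSquaresResidual s x y :=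
  sub_nonneg.mpr <| div_le_of_le_mul₀ (sum_nonneg fun _ _ => sq_nonneg _)
    (sum_nonneg fun _ _ => sq_nonneg _) (sum_mul_sq_le_sq_mul_sq s y x)

theorem leastSquaresResidual_le_sum_sub_sq (x y : ι → ℝ) :
    leastSquaresResidual s x y ≤ ∑ i ∈ s, (x i - y i) ^ 2 := by
  set Sxx := ∑ i ∈ s, x i ^ 2
  set Sxy := ∑ i ∈ s, y i * x i
  have hexpand : ∑ i ∈ s, (x i - y i) ^ 2 = ∑ i ∈ s, y i ^ 2 - 2 * Sxy + Sxx := by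
    simp only [Sxx, Sxy, mul_sum, ← sum_sub_distrib, ← sum_add_distrib]
    exact sum_congr rfl fun i _ => by ring
  suffices 2 * Sxy - Sxx ≤ Sxy ^ 2 / Sxx by
    rw [hexpand, leastSquaresResidual]; linarith
  have hSxx_nonneg : 0 ≤ Sxx := sum_nonneg fun i _ => sq_nonneg (x i)
  rcases hSxx_nonneg.eq_or_lt with hSxx | hSxx
  · have hx : ∀ i ∈ s, x i = 0 := fun i hi =>
      pow_eq_zero_iff two_ne_zero |>.mp <|
        (sum_eq_zero_iff_of_nonneg fun j _ => sq_nonneg (x j)).mp hSxx.symm i hi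
    have hSxy : Sxy = 0 := sum_eq_zero fun i hi => by rw [hx i hi, mul_zero]
    rw [← hSxx, hSxy]; simp
  · rw [le_div_iff₀ hSxx]
    nlinarith [sq_nonneg (Sxy - Sxx)]

end LeastSquares

theorem abs_rpow_sub_rpow_le {α x y : ℝ} (hα : 1 ≤ α) (hx : x ∈ Set.Icc (0 : ℝ) 1)
    (hy : y ∈ Set.Icc (0 : ℝ) 1) : |x ^ α - y ^ α| ≤ α * |x - y| := by
  have hderiv : ∀ t ∈ Set.Icc (0 : ℝ) 1, ‖α * t ^ (α - 1)‖ ≤ α := fun t ht => by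
    rw [Real.norm_eq_abs, abs_of_nonneg (by have := ht.1; positivity)]
    exact mul_le_of_le_one_right (by linarith) (Real.rpow_le_one ht.1 ht.2 (by linarith))
  exact (convex_Icc 0 1).norm_image_sub_le_of_norm_hasDerivWithin_le
    (fun t _ => (Real.hasDerivAt_rpow_const (Or.inr hα)).hasDerivWithinAt) hderiv hy hx

theorem sum_sq_le_card_mul_sq {ι : Type*} (s : Finset ι) (f : ι → ℝ) {ε : ℝ}
    (hf : ∀ i ∈ s, |f i| ≤ ε) : ∑ i ∈ s, f i ^ 2 ≤ s.card * ε ^ 2 := by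
  rw [← nsmul_eq_mul, ← sum_const]
  exact sum_le_sum fun i hi => sq_le_sq' (abs_le.mp (hf i hi)).1 (abs_le.mp (hf i hi)).2

theorem leastSquaresResidual_rpow_samples_le {α : ℝ} (hα : 1 ≤ α) {N : ℕ} (hN : 1 ≤ N) :
    leastSquaresResidual (Icc 1 N) (fun k : ℕ => (1 - ((k : ℝ) - 1) / N) ^ α)
      (fun k : ℕ => (1 - (k : ℝ) / N) ^ α) ≤ α ^ 2 / N := by
  have hNpos : (0 : ℝ) < N := by exact_mod_cast hN
  have hstep : ∀ k ∈ Icc 1 N,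
      |(1 - ((k : ℝ) - 1) / N) ^ α - (1 - (k : ℝ) / N) ^ α| ≤ α / N := by
    intro k hk
    obtain ⟨hk1, hkN⟩ := Finset.mem_Icc.mp hk
    have hk1' : (1 : ℝ) ≤ k := by exact_mod_cast hk1
    have hkN' : (k : ℝ) ≤ N := by exact_mod_cast hkN
    have hmem : ∀ j : ℝ, 0 ≤ j → j ≤ N → 1 - j / N ∈ Set.Icc (0 : ℝ) 1 := fun j hj0 hjN =>
      ⟨sub_nonneg.mpr ((div_le_one hNpos).mpr hjN), sub_le_self _ (by positivity)⟩
    calc _ ≤ α * |(1 - ((k : ℝ) - 1) / N) - (1 - (k : ℝ) / N)| :=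
          abs_rpow_sub_rpow_le hα (hmem _ (by linarith) (by linarith)) (hmem _ (by linarith) hkN')
      _ = α / N := by
          rw [show (1 - ((k : ℝ) - 1) / N) - (1 - (k : ℝ) / N) = 1 / N by field_simp; ring,
            abs_of_pos (by positivity)]
          ring
  calc _ ≤ _ := leastSquaresResidual_le_sum_sub_sq _ _ _
    _ ≤ (Icc 1 N).card * (α / N) ^ 2 := sum_sq_le_card_mul_sq _ _ hstep
    _ = α ^ 2 / N := by
        rw [Nat.card_Icc, Nat.add_sub_cancel]
        field_simp

/-- DMD paradox, part 1: the one-dimensional DMD least-squares error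
`ERR_N = Σ a_k² − (Σ a_k a_{k−1})²/(Σ a_{k−1}²)` for `N` uniform samples of
the decay profile `a(t) = (1+λ(2−p)t)^{1/(2−p)}` on `[0,T]` tends to `0`
as `N → ∞`. -/
theorem stmt3 (p lam T : ℝ) (hp1 : 1 ≤ p) (hp2 : p < 2) (hlam : lam < 0)
    (hT : T = -1 / (lam * (2 - p)))
    (a : ℝ → ℝ) (ha : ∀ t : ℝ, a t = (1 + lam * (2 - p) * t) ^ ((1 : ℝ) / (2 - p)))
    (ERR : ℕ → ℝ)
    (hERR : ∀ N : ℕ, ERR N =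
      (∑ k ∈ Finset.Icc 1 N, (a ((k : ℝ) * T / N)) ^ 2) -
      (∑ k ∈ Finset.Icc 1 N, a ((k : ℝ) * T / N) * a (((k : ℝ) - 1) * T / N)) ^ 2 /
      (∑ k ∈ Finset.Icc 1 N, (a (((k : ℝ) - 1) * T / N)) ^ 2)) :
    Tendsto (fun N : ℕ => ERR N) atTop (nhds 0) := by
  set α : ℝ := 1 / (2 - p)
  have h2p : 0 < 2 - p := by linarith
  have hα : 1 ≤ α := by rw [le_div_iff₀ h2p]; linarith
  have hsample : ∀ (N : ℕ) (x : ℝ), a (x * T / N) = (1 - x / N) ^ α := fun N x => by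
    have hcT : lam * (2 - p) * T = -1 := by
      rw [hT, mul_div_cancel₀ _ (mul_neg_of_neg_of_pos hlam h2p).ne]
    rw [ha, show lam * (2 - p) * (x * T / N) = lam * (2 - p) * T * (x / N) by ring, hcT]
    ring_nf
  have hERR' : ∀ N, ERR N = leastSquaresResidual (Icc 1 N)
      (fun k : ℕ => (1 - ((k : ℝ) - 1) / N) ^ α) (fun k : ℕ => (1 - (k : ℝ) / N) ^ α) := by
    intro N
    simp only [hERR, hsample, leastSquaresResidual]
  refine squeeze_zero' (Eventually.of_forall fun N => ?_) ?_
    (tendsto_const_div_atTop_nhds_zero_nat (α ^ 2))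
  · rw [hERR']
    exact leastSquaresResidual_nonneg _ _ _
  · filter_upwards [eventually_ge_atTop 1] with N hN
    rw [hERR']
    exact leastSquaresResidual_rpow_samples_le hα hN
end

section
/- Fix p ∈ [1,2) and λ < 0, set T = −1/(λ(2−p)), and let a(t) = (1 + λ(2−p)t)^{1/(2−p)} for t ∈ [0,T]. Then ∫₀ᵀ ( a(t) − e^{λ(4−p)t/2} )² dt ≥ B, where B := (−1/(λ(4−p))) · (1 − √(1 − e^{−(4−p)/(2−p)}))², and moreover B > 0. -/
/-!
In `L²(0, T)` the reverse triangle inequality gives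
`‖a - r‖² ≥ (‖a‖ - ‖r‖)²` for `r(t) = e^{λ(4-p)t/2}`. Both norms are explicit:
`‖a‖² = ∫₀ᵀ (1 + λ(2-p)t)^{2/(2-p)} dt = -1/(λ(4-p))` and
`‖r‖² = -1/(λ(4-p)) · (1 - e^{-(4-p)/(2-p)})`, and `(‖a‖ - ‖r‖)²` is exactly `B`.
It is positive because `e^{-(4-p)/(2-p)} > 0` makes `‖r‖ < ‖a‖`.
-/

open Real Set MeasureTheory

theorem integral_mul_le_sqrt_integral_sq_mul_sqrt_integral_sq {α : Type*} [MeasurableSpace α]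
    {μ : Measure α} {f g : α → ℝ} (hf : MemLp f 2 μ) (hg : MemLp g 2 μ) :
    ∫ x, f x * g x ∂μ ≤ √(∫ x, f x ^ 2 ∂μ) * √(∫ x, g x ^ 2 ∂μ) := by
  -- Cauchy–Schwarz: the quadratic `t ↦ ∫ (t f - g)²` is nonnegative, so its discriminant is `≤ 0`.
  have hquad (t : ℝ) : 0 ≤ (∫ x, f x ^ 2 ∂μ) * (t * t) + (-2 * ∫ x, f x * g x ∂μ) * t
      + ∫ x, g x ^ 2 ∂μ := by
    have hexpand : ∫ x, (t * f x - g x) ^ 2 ∂μ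
        = ∫ x, (t ^ 2 * f x ^ 2 - 2 * t * (f x * g x) + g x ^ 2) ∂μ := by
      congr 1 with x; ring
    have hint : 0 ≤ ∫ x, (t * f x - g x) ^ 2 ∂μ := integral_nonneg fun x => sq_nonneg _
    rw [hexpand, integral_add, integral_sub, integral_const_mul, integral_const_mul] at hint
    · linarith
    · exact hf.integrable_sq.const_mul _
    · exact (hf.integrable_mul hg).const_mul _
    · exact (hf.integrable_sq.const_mul _).sub ((hf.integrable_mul hg).const_mul _)
    · exact hg.integrable_sq
  have hdisc := discrim_le_zero hquad
  rw [discrim] at hdisc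
  rw [← sqrt_mul (integral_nonneg fun x => sq_nonneg (f x))]
  exact le_sqrt_of_sq_le (by linarith)

theorem sq_sqrt_integral_sq_sub_le_integral_sq_sub {α : Type*} [MeasurableSpace α]
    {μ : Measure α} {f g : α → ℝ} (hf : MemLp f 2 μ) (hg : MemLp g 2 μ) :
    (√(∫ x, f x ^ 2 ∂μ) - √(∫ x, g x ^ 2 ∂μ)) ^ 2 ≤ ∫ x, (f x - g x) ^ 2 ∂μ := by
  have hexpand : ∫ x, (f x - g x) ^ 2 ∂μ = ∫ x, (f x ^ 2 - 2 * (f x * g x) + g x ^ 2) ∂μ := by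
    congr 1 with x; ring
  rw [hexpand, integral_add, integral_sub, integral_const_mul, sub_sq,
    sq_sqrt (integral_nonneg fun x => sq_nonneg (f x)),
    sq_sqrt (integral_nonneg fun x => sq_nonneg (g x))]
  · linarith [integral_mul_le_sqrt_integral_sq_mul_sqrt_integral_sq hf hg]
  · exact hf.integrable_sq
  · exact (hf.integrable_mul hg).const_mul _
  · exact hf.integrable_sq.sub ((hf.integrable_mul hg).const_mul _)
  · exact hg.integrable_sq

theorem ContinuousOn.memLp_two_restrict_Icc {f : ℝ → ℝ} {a b : ℝ}
    (hf : ContinuousOn f (Icc a b)) :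
    MemLp f 2 (volume.restrict (Icc a b)) :=
  (memLp_two_iff_integrable_sq (hf.aestronglyMeasurable measurableSet_Icc)).2
    ((hf.pow 2).integrableOn_compact isCompact_Icc)

theorem integral_one_add_mul_rpow_of_neg {c r : ℝ} (hc : c < 0) (hr : -1 < r) :
    ∫ t in (0 : ℝ)..-1 / c, (1 + c * t) ^ r = -1 / (c * (r + 1)) := by
  rw [intervalIntegral.integral_comp_add_mul (fun t => t ^ r) hc.ne, integral_rpow (Or.inl hr)]
  have hend : 1 + c * (-1 / c) = 0 := by
    rw [mul_div_assoc', mul_neg_one, neg_div_self hc.ne]; ring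
  rw [hend, mul_zero, add_zero, zero_rpow (by linarith), one_rpow, smul_eq_mul,
    div_mul_eq_div_div_swap]
  ring

theorem integral_sq_one_add_mul_rpow_of_neg {c q : ℝ} (hc : c < 0) (hq : -1 < 2 * q) :
    ∫ t in (0 : ℝ)..-1 / c, ((1 + c * t) ^ q) ^ 2 = -1 / (c * (2 * q + 1)) := by
  have hbase : ∀ t ∈ uIcc (0 : ℝ) (-1 / c), 0 ≤ 1 + c * t := by
    intro t ht
    rw [uIcc_of_le (by rw [neg_div, neg_nonneg]; exact (one_div_neg.2 hc).le)] at ht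
    have := mul_le_mul_of_nonpos_left ht.2 hc.le
    rw [mul_div_assoc', mul_neg_one, neg_div_self hc.ne] at this
    linarith
  rw [intervalIntegral.integral_congr fun t ht => (rpow_mul_natCast (hbase t ht) q 2).symm]
  push_cast
  rw [mul_comm q 2]
  exact integral_one_add_mul_rpow_of_neg hc hq

theorem integral_exp_mul_div_two_sq {k a b : ℝ} (hk : k ≠ 0) :
    ∫ t in a..b, exp (k * t / 2) ^ 2 = (exp (k * b) - exp (k * a)) / k := by
  have hsq (t : ℝ) : exp (k * t / 2) ^ 2 = exp (k * t) := by rw [← exp_nat_mul]; ring_nf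
  simp_rw [hsq]
  rw [intervalIntegral.integral_comp_mul_left (fun t => exp t) hk, integral_exp, smul_eq_mul,
    inv_mul_eq_div]

theorem sq_sqrt_intervalIntegral_sq_sub_le {f g : ℝ → ℝ} {a b : ℝ} (hab : a ≤ b)
    (hf : ContinuousOn f (Icc a b)) (hg : ContinuousOn g (Icc a b)) :
    (√(∫ t in a..b, f t ^ 2) - √(∫ t in a..b, g t ^ 2)) ^ 2 ≤ ∫ t in a..b, (f t - g t) ^ 2 := by
  simp only [intervalIntegral.integral_of_le hab, ← integral_Icc_eq_integral_Ioc]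
  exact sq_sqrt_integral_sq_sub_le_integral_sq_sub hf.memLp_two_restrict_Icc
    hg.memLp_two_restrict_Icc

theorem stmt4_general (p lam T : ℝ) (hp2 : p < 2) (hlam : lam < 0)
    (hT : T = -1 / (lam * (2 - p)))
    (a : ℝ → ℝ) (ha : ∀ t : ℝ, a t = (1 + lam * (2 - p) * t) ^ ((1 : ℝ) / (2 - p)))
    (B : ℝ)
    (hB : B = (-1 / (lam * (4 - p))) *
      (1 - Real.sqrt (1 - Real.exp (-(4 - p) / (2 - p)))) ^ 2) :
    B ≤ ∫ t in (0 : ℝ)..T, (a t - Real.exp (lam * (4 - p) * t / 2)) ^ 2 ∧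
    0 < B := by
  simp_rw [ha]
  have h2p : 0 < 2 - p := by linarith
  have hc : lam * (2 - p) < 0 := mul_neg_of_neg_of_pos hlam h2p
  have hk : lam * (4 - p) < 0 := mul_neg_of_neg_of_pos hlam (by linarith)
  set M := -1 / (lam * (4 - p)) with hM
  set E := exp (-(4 - p) / (2 - p))
  have hM0 : 0 < M := by rw [hM, neg_div, neg_pos]; exact div_neg_of_pos_of_neg one_pos hk
  have hT0 : 0 ≤ T := by rw [hT, neg_div, neg_nonneg]; exact (one_div_neg.2 hc).le
  have hprofile :
      ∫ t in (0 : ℝ)..T, ((1 + lam * (2 - p) * t) ^ ((1 : ℝ) / (2 - p))) ^ 2 = M := by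
    have hq : -1 < 2 * (1 / (2 - p)) := by linarith [one_div_pos.2 h2p]
    have hexp : lam * (2 - p) * (2 * (1 / (2 - p)) + 1) = lam * (4 - p) := by field_simp; ring
    rw [hT, integral_sq_one_add_mul_rpow_of_neg hc hq, hexp]
  have hrecon : ∫ t in (0 : ℝ)..T, exp (lam * (4 - p) * t / 2) ^ 2 = M * (1 - E) := by
    have hkT : lam * (4 - p) * T = -(4 - p) / (2 - p) := by
      rw [hT]; field_simp [hlam.ne]
    rw [integral_exp_mul_div_two_sq hk.ne, hkT, mul_zero, exp_zero]
    ring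
  have hB' : B = (√M - √(M * (1 - E))) ^ 2 := by
    rw [hB, sqrt_mul hM0.le, ← mul_one_sub, mul_pow, sq_sqrt hM0.le]
  refine ⟨?_, ?_⟩
  · rw [hB', ← hrecon, ← hprofile]
    refine sq_sqrt_intervalIntegral_sq_sub_le hT0 (Continuous.continuousOn ?_) (by fun_prop)
    exact (continuous_const.add (continuous_const.mul continuous_id)).rpow_const
      fun _ => Or.inr (by positivity)
  · have hsqrt : √(1 - E) < 1 := (sqrt_lt' one_pos).2 (by linarith [exp_pos (-(4 - p) / (2 - p))])
    rw [hB]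
    exact mul_pos hM0 (pow_pos (by linarith) 2)

/-- DMD paradox, core estimate: the time-continuous reconstruction error
between the decay profile `a(t) = (1+λ(2−p)t)^{1/(2−p)}` and the DMD
reconstruction `e^{λ(4−p)t/2}` over `[0,T]`, `T = −1/(λ(2−p))`, is bounded
below by the strictly positive constant
`B = (−1/(λ(4−p)))·(1 − √(1 − e^{−(4−p)/(2−p)}))²`. -/
theorem stmt4 (p lam T : ℝ) (hp1 : 1 ≤ p) (hp2 : p < 2) (hlam : lam < 0)
    (hT : T = -1 / (lam * (2 - p)))
    (a : ℝ → ℝ) (ha : ∀ t : ℝ, a t = (1 + lam * (2 - p) * t) ^ ((1 : ℝ) / (2 - p)))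
    (B : ℝ)
    (hB : B = (-1 / (lam * (4 - p))) *
      (1 - Real.sqrt (1 - Real.exp (-(4 - p) / (2 - p)))) ^ 2) :
    B ≤ ∫ t in (0 : ℝ)..T, (a t - Real.exp (lam * (4 - p) * t / 2)) ^ 2 ∧
    0 < B :=
  stmt4_general p lam T hp2 hlam hT a ha B hB
end

section
/- Fix p ∈ [1,2) and λ < 0, set T = −1/(λ(2−p)), and let a(t) = (1 + λ(2−p)t)^{1/(2−p)} for t ∈ [0,T]. Let δ ∈ (0,2) with δ ≠ 1 and define the sampling times t_k = (|1−δ|^{k(2−p)} − 1)/(λ(2−p)) for integers k ≥ 0. Then for every k ≥ 0: (i) 0 ≤ t_k < T and t_k < t_{k+1}; (ii) a(t_k) = |1−δ|^k. Consequently the sampled values are geometric: a(t_{k+1}) = |1−δ| · a(t_k) for all k ≥ 0, so a single linear recurrence with factor μ = |1−δ| reproduces all samples exactly (zero DMD reconstruction error). -/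
/-! With `c = λ(2−p) < 0` and `r = |1−δ|^{2−p} ∈ (0,1)`, the sampling time is
`t_k = (r^k − 1)/c`, so `1 + c t_k = r^k`. Hence `a(t_k) = (r^k)^{1/(2−p)} = |1−δ|^k`, and
the bounds on `t_k` reduce to `0 < r^{k+1} < r^k ≤ 1` divided by the negative `c`. -/

noncomputable def sampleTime (c r : ℝ) (k : ℕ) : ℝ := (r ^ k - 1) / c

section SampleTime

variable {c r : ℝ}

lemma sampleTime_nonneg (hc : c < 0) (hr0 : 0 ≤ r) (hr1 : r ≤ 1) (k : ℕ) :
    0 ≤ sampleTime c r k :=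
  div_nonneg_of_nonpos (sub_nonpos.2 (pow_le_one₀ hr0 hr1)) hc.le

lemma sampleTime_lt_neg_one_div (hc : c < 0) (hr : 0 < r) (k : ℕ) :
    sampleTime c r k < -1 / c :=
  (div_lt_div_right_of_neg hc).2 (by linarith [pow_pos hr k])

lemma sampleTime_strictMono (hc : c < 0) (hr0 : 0 < r) (hr1 : r < 1) :
    StrictMono (sampleTime c r) :=
  strictMono_nat_of_lt_succ fun k =>
    (div_lt_div_right_of_neg hc).2 <|
      sub_lt_sub_right (pow_lt_pow_right_of_lt_one₀ hr0 hr1 (Nat.lt_add_one k)) 1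

lemma one_add_mul_sampleTime_rpow {μ q : ℝ} (hc : c ≠ 0) (hμ : 0 ≤ μ) (hq : q ≠ 0)
    (k : ℕ) :
    (1 + c * sampleTime c (μ ^ q) k) ^ (1 / q) = μ ^ k := by
  rw [sampleTime, mul_div_cancel₀ _ hc, add_sub_cancel, Real.rpow_pow_comm hμ, one_div,
    Real.rpow_rpow_inv (pow_nonneg hμ k) hq]

end SampleTime

theorem stmt5_general (p lam T : ℝ) (hp2 : p < 2) (hlam : lam < 0)
    (hT : T = -1 / (lam * (2 - p)))
    (a : ℝ → ℝ) (ha : ∀ t : ℝ, a t = (1 + lam * (2 - p) * t) ^ ((1 : ℝ) / (2 - p)))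
    (δ : ℝ) (hδ : δ ∈ Set.Ioo (0 : ℝ) 2) (hδ1 : δ ≠ 1)
    (t : ℕ → ℝ)
    (ht : ∀ k : ℕ, t k = (|1 - δ| ^ ((k : ℝ) * (2 - p)) - 1) / (lam * (2 - p))) :
    ∀ k : ℕ,
      (0 ≤ t k ∧ t k < T) ∧
      t k < t (k + 1) ∧
      a (t k) = |1 - δ| ^ k ∧
      a (t (k + 1)) = |1 - δ| * a (t k) := by
  obtain ⟨hδ0, hδ2⟩ := hδ
  have hq : 0 < 2 - p := by linarith
  have hc : lam * (2 - p) < 0 := mul_neg_of_neg_of_pos hlam hq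
  have hμ0 : 0 < |1 - δ| := abs_pos.2 (sub_ne_zero.2 hδ1.symm)
  have hμ1 : |1 - δ| < 1 := abs_lt.2 ⟨by linarith, by linarith⟩
  have hr0 : 0 < |1 - δ| ^ (2 - p) := Real.rpow_pos_of_pos hμ0 _
  have hr1 : |1 - δ| ^ (2 - p) < 1 := Real.rpow_lt_one hμ0.le hμ1 hq
  have ht' : ∀ k, t k = sampleTime (lam * (2 - p)) (|1 - δ| ^ (2 - p)) k := fun k => by
    rw [ht, mul_comm, Real.rpow_mul_natCast hμ0.le, sampleTime]
  have ha' : ∀ k, a (t k) = |1 - δ| ^ k := fun k => by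
    rw [ha, ht', one_add_mul_sampleTime_rpow hc.ne hμ0.le hq.ne']
  intro k
  refine ⟨⟨?_, ?_⟩, ?_, ha' k, by rw [ha', ha', pow_succ']⟩
  · rw [ht']
    exact sampleTime_nonneg hc hr0.le hr1.le k
  · rw [ht', hT]
    exact sampleTime_lt_neg_one_div hc hr0 k
  · rw [ht', ht']
    exact sampleTime_strictMono hc hr0 hr1 k.lt_succ_self

/-- Adaptive sampling of the decay profile: sampling
`a(t) = (1+λ(2−p)t)^{1/(2−p)}` at the times
`t_k = (|1−δ|^{k(2−p)} − 1)/(λ(2−p))` gives `0 ≤ t_k < T`, `t_k < t_{k+1}`,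
`a(t_k) = |1−δ|^k`, and hence the geometric recurrence
`a(t_{k+1}) = |1−δ|·a(t_k)`, so the samples are reproduced exactly by a
single linear recurrence with factor `μ = |1−δ|`. -/
theorem stmt5 (p lam T : ℝ) (hp1 : 1 ≤ p) (hp2 : p < 2) (hlam : lam < 0)
    (hT : T = -1 / (lam * (2 - p)))
    (a : ℝ → ℝ) (ha : ∀ t : ℝ, a t = (1 + lam * (2 - p) * t) ^ ((1 : ℝ) / (2 - p)))
    (δ : ℝ) (hδ : δ ∈ Set.Ioo (0 : ℝ) 2) (hδ1 : δ ≠ 1)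
    (t : ℕ → ℝ)
    (ht : ∀ k : ℕ, t k = (|1 - δ| ^ ((k : ℝ) * (2 - p)) - 1) / (lam * (2 - p))) :
    ∀ k : ℕ,
      (0 ≤ t k ∧ t k < T) ∧
      t k < t (k + 1) ∧
      a (t k) = |1 - δ| ^ k ∧
      a (t (k + 1)) = |1 - δ| * a (t k) :=
  stmt5_general p lam T hp2 hlam hT a ha δ hδ hδ1 t ht
end

section
/- Fix p ∈ [1,2), M ≥ 1, and let P : ℝ^M → ℝ^M satisfy P(aψ) = a·|a|^{p−2}·P(ψ) for every real a ≠ 0 and ψ ∈ ℝ^M. Let f ∈ ℝ^M be nonzero with P(f) = λf for some λ < 0, and let δ ∈ (0,1). Define the explicit scheme ψ_0 = f, ψ_{k+1} = ψ_k + dt_k · P(ψ_k), with the adaptive step size dt_k = −(⟨P(ψ_k), ψ_k⟩ / ‖P(ψ_k)‖²) · δ. Then P(ψ_k) ≠ 0 for every k and ψ_k = (1−δ)^k · f for all k ≥ 0; in particular ψ_{k+1} = (1−δ)·ψ_k for all k, so the rank-one linear map A = (1−δ)·f fᵀ/‖f‖² reproduces the scheme exactly and the DMD reconstruction error is zero.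 -/
/-!
If `P f = λ f` with `λ ≠ 0`, then `(p − 1)`-homogeneity makes every nonzero multiple `c f` an
eigenvector as well, with eigenvalue `|c|^(p−2) λ ≠ 0`. On an eigenvector `x` with eigenvalue `μ`
the adaptive step is `dt = −δ/μ`, independent of `‖x‖`, so the step sends `x` to `(1 − δ) x`.
Starting from `f`, the scheme therefore stays on the ray of `f` and contracts by `1 − δ` each step.
-/

open RealInnerProductSpace

section

variable {E : Type*} [NormedAddCommGroup E] [InnerProductSpace ℝ E]

noncomputable def adaptiveStep (P : E → E) (δ : ℝ) (x : E) : E :=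
  x + (-(⟪P x, x⟫ / ‖P x‖ ^ 2) * δ) • P x

theorem adaptiveStep_of_apply_eq_smul {P : E → E} (δ : ℝ) {x : E} {μ : ℝ} (hμ : μ ≠ 0)
    (hx : P x = μ • x) : adaptiveStep P δ x = (1 - δ) • x := by
  rcases eq_or_ne x 0 with rfl | hx0
  · simp [adaptiveStep, hx]
  have hxn : ‖x‖ ≠ 0 := norm_ne_zero_iff.mpr hx0
  have hstep : -(⟪μ • x, x⟫ / ‖μ • x‖ ^ 2) * δ * μ = -δ := by
    rw [real_inner_smul_left, real_inner_self_eq_norm_sq, norm_smul, Real.norm_eq_abs, mul_pow,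
      sq_abs]
    field_simp
  rw [adaptiveStep, hx, smul_smul, hstep, sub_smul, one_smul, neg_smul, sub_eq_add_neg]

theorem apply_smul_eq_smul_of_homogeneous {P : E → E} {p : ℝ}
    (hP : ∀ c : ℝ, c ≠ 0 → ∀ x : E, P (c • x) = (c * |c| ^ (p - 2)) • P x)
    {f : E} {lam : ℝ} (hf : P f = lam • f) {c : ℝ} (hc : c ≠ 0) :
    P (c • f) = (|c| ^ (p - 2) * lam) • (c • f) := by
  rw [hP c hc, hf, smul_smul, smul_smul]
  ring_nf

theorem smul_inner_smul_div_norm_sq {f : E} (hf : f ≠ 0) (c : ℝ) :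
    (⟪f, c • f⟫ / ‖f‖ ^ 2) • f = c • f := by
  have hfn : ‖f‖ ≠ 0 := norm_ne_zero_iff.mpr hf
  rw [real_inner_smul_right, real_inner_self_eq_norm_sq]
  field_simp

end

theorem stmt6_general (p : ℝ) (M : ℕ)
    (P : EuclideanSpace ℝ (Fin M) → EuclideanSpace ℝ (Fin M))
    (hP : ∀ c : ℝ, c ≠ 0 → ∀ ψ : EuclideanSpace ℝ (Fin M),
      P (c • ψ) = (c * |c| ^ (p - 2)) • P ψ)
    (f : EuclideanSpace ℝ (Fin M)) (hf : f ≠ 0)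
    (lam : ℝ) (hlam : lam < 0) (hef : P f = lam • f)
    (δ : ℝ) (hδ : δ ∈ Set.Ioo (0 : ℝ) 1)
    (ψ : ℕ → EuclideanSpace ℝ (Fin M)) (hψ0 : ψ 0 = f)
    (hψ : ∀ k : ℕ, ψ (k + 1) = ψ k +
      (-((inner ℝ (P (ψ k)) (ψ k) : ℝ) / ‖P (ψ k)‖ ^ 2) * δ) • P (ψ k)) :
    ∀ k : ℕ,
      P (ψ k) ≠ 0 ∧
      ψ k = ((1 - δ) ^ k) • f ∧
      ψ (k + 1) = (1 - δ) • ψ k ∧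
      ((1 - δ) / ‖f‖ ^ 2) • ((inner ℝ f (ψ k) : ℝ) • f) = ψ (k + 1) := by
  have hc : ∀ k : ℕ, (1 - δ) ^ k ≠ 0 := fun k => pow_ne_zero k (sub_ne_zero.mpr hδ.2.ne')
  have heig : ∀ k : ℕ,
      P ((1 - δ) ^ k • f) = (|(1 - δ) ^ k| ^ (p - 2) * lam) • ((1 - δ) ^ k • f) :=
    fun k => apply_smul_eq_smul_of_homogeneous hP hef (hc k)
  have heig_ne : ∀ k : ℕ, |(1 - δ) ^ k| ^ (p - 2) * lam ≠ 0 := fun k =>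
    mul_ne_zero (Real.rpow_pos_of_pos (abs_pos.mpr (hc k)) _).ne' hlam.ne
  have hstep : ∀ k, ψ (k + 1) = adaptiveStep P δ (ψ k) := hψ
  have hclosed : ∀ k : ℕ, ψ k = (1 - δ) ^ k • f := by
    intro k
    induction k with
    | zero => simpa using hψ0
    | succ k ih =>
      rw [hstep, ih, adaptiveStep_of_apply_eq_smul δ (heig_ne k) (heig k), smul_smul, pow_succ']
  intro k
  have hnext : ψ (k + 1) = (1 - δ) • ψ k := by
    rw [hstep, hclosed k, adaptiveStep_of_apply_eq_smul δ (heig_ne k) (heig k)]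
  refine ⟨?_, hclosed k, hnext, ?_⟩
  · rw [hclosed k, heig k]
    exact smul_ne_zero (heig_ne k) (smul_ne_zero (hc k) hf)
  · rw [hnext, hclosed k, smul_smul, div_mul_eq_mul_div, mul_div_assoc, ← smul_smul,
      smul_inner_smul_div_norm_sq hf]

/-- Zero reconstruction error for the adaptive-step explicit scheme:
for a `(p−1)`-homogeneous operator `P` and an eigenfunction initial
condition `P f = λ f` (`λ < 0`, `f ≠ 0`), the explicit scheme
`ψ_{k+1} = ψ_k + dt_k P(ψ_k)` with adaptive step size
`dt_k = −(⟨P(ψ_k),ψ_k⟩/‖P(ψ_k)‖²)·δ`, `δ ∈ (0,1)`, satisfies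
`P(ψ_k) ≠ 0`, `ψ_k = (1−δ)^k f`, and `ψ_{k+1} = (1−δ) ψ_k`, so the
rank-one linear map `(1−δ)·f fᵀ/‖f‖²` reproduces the scheme exactly. -/
theorem stmt6 (p : ℝ) (hp1 : 1 ≤ p) (hp2 : p < 2) (M : ℕ) (hM : 1 ≤ M)
    (P : EuclideanSpace ℝ (Fin M) → EuclideanSpace ℝ (Fin M))
    (hP : ∀ c : ℝ, c ≠ 0 → ∀ ψ : EuclideanSpace ℝ (Fin M),
      P (c • ψ) = (c * |c| ^ (p - 2)) • P ψ)
    (f : EuclideanSpace ℝ (Fin M)) (hf : f ≠ 0)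
    (lam : ℝ) (hlam : lam < 0) (hef : P f = lam • f)
    (δ : ℝ) (hδ : δ ∈ Set.Ioo (0 : ℝ) 1)
    (ψ : ℕ → EuclideanSpace ℝ (Fin M)) (hψ0 : ψ 0 = f)
    (hψ : ∀ k : ℕ, ψ (k + 1) = ψ k +
      (-((inner ℝ (P (ψ k)) (ψ k) : ℝ) / ‖P (ψ k)‖ ^ 2) * δ) • P (ψ k)) :
    ∀ k : ℕ,
      P (ψ k) ≠ 0 ∧
      ψ k = ((1 - δ) ^ k) • f ∧
      ψ (k + 1) = (1 - δ) • ψ k ∧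
      ((1 - δ) / ‖f‖ ^ 2) • ((inner ℝ f (ψ k) : ℝ) • f) = ψ (k + 1) :=
  stmt6_general p M P hP f hf lam hlam hef δ hδ ψ hψ0 hψ
end

section
/- Let R : ℝ^M → ℝ be convex and differentiable with R ≥ 0 and R(0) = 0, and write ∇R for its gradient. Let ψ : [0,∞) → ℝ^M be differentiable with ∇R(ψ(t)) ≠ 0 for all t ≥ 0 and satisfying the time-rescaled gradient flow ψ'(t) = −(⟨∇R(ψ(t)), ψ(t)⟩ / ‖∇R(ψ(t))‖²) · ∇R(ψ(t)). Then R(ψ(t)) ≤ R(ψ(0)) · e^{−t} for all t ≥ 0. -/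
/-!
By convexity, the tangent plane of `R` at `x`, evaluated at `0`, lies below `R 0 = 0`, i.e.
`R x ≤ ⟪∇R x, x⟫`. The rescaling of the flow is chosen so that `d/dt R(ψ t) = -⟪∇R(ψ t), ψ t⟫`,
hence `d/dt R(ψ t) ≤ -R(ψ t)`, and Grönwall's inequality gives the exponential decay.
-/

open Real Set InnerProductSpace

theorem ConvexOn.add_fderiv_sub_le {F : Type*} [NormedAddCommGroup F] [NormedSpace ℝ F]
    {f : F → ℝ} {f' : F →L[ℝ] ℝ} {s : Set F} {x y : F}
    (hf : ConvexOn ℝ s f) (hx : x ∈ s) (hy : y ∈ s) (hf' : HasFDerivAt f f' x) :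
    f x + f' (y - x) ≤ f y := by
  set φ : ℝ → ℝ := f ∘ AffineMap.lineMap x y
  have hφ : ConvexOn ℝ (Icc 0 1) φ := by
    refine (hf.comp_affineMap (AffineMap.lineMap x y)).subset (fun r hr => ?_) (convex_Icc 0 1)
    exact (convex_iff_segment_subset.mp hf.1 hx hy) ⟨1 - r, r, by linarith [hr.2], hr.1,
      by ring, by simp [AffineMap.lineMap_apply_module]⟩
  have hφ' : HasDerivAt φ (f' (y - x)) 0 := by
    have hf'0 : HasFDerivAt f f' (AffineMap.lineMap x y (0 : ℝ)) := by simpa using hf'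
    exact hf'0.comp_hasDerivAt (0 : ℝ) AffineMap.hasDerivAt_lineMap
  have := hφ.le_slope_of_hasDerivAt (by simp) (by simp) zero_lt_one hφ'
  simp only [φ, slope, Function.comp_apply, AffineMap.lineMap_apply_zero,
    AffineMap.lineMap_apply_one, sub_zero, inv_one, one_smul, vsub_eq_sub] at this
  linarith

theorem HasGradientAt.comp_hasDerivAt {F : Type*} [NormedAddCommGroup F] [InnerProductSpace ℝ F]
    [CompleteSpace F] {f : F → ℝ} {f' : F} {γ : ℝ → F} {γ' : F} {t : ℝ}
    (hf : HasGradientAt f f' (γ t)) (hγ : HasDerivAt γ γ' t) :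
    HasDerivAt (f ∘ γ) (inner ℝ f' γ') t := by
  simpa using hf.hasFDerivAt.comp_hasDerivAt t hγ

theorem real_inner_neg_div_norm_sq_smul_self {F : Type*} [NormedAddCommGroup F]
    [InnerProductSpace ℝ F] {v : F} (hv : v ≠ 0) (a : ℝ) :
    inner ℝ v (-(a / ‖v‖ ^ 2) • v) = -a := by
  have : ‖v‖ ≠ 0 := norm_ne_zero_iff.mpr hv
  rw [real_inner_smul_right, real_inner_self_eq_norm_sq]
  field_simp

theorem le_mul_exp_of_hasDerivAt_le_mul {f f' : ℝ → ℝ} {K a t : ℝ}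
    (hf : ∀ s, a ≤ s → HasDerivAt f (f' s) s) (bound : ∀ s, a ≤ s → f' s ≤ K * f s)
    (ht : a ≤ t) : f t ≤ f a * exp (K * (t - a)) := by
  have := le_gronwallBound_of_liminf_deriv_right_le (b := t) (ε := 0)
    (fun s hs => (hf s hs.1).continuousAt.continuousWithinAt)
    (fun s hs _ hr => (hf s hs.1).hasDerivWithinAt.liminf_right_slope_le hr) le_rfl
    (fun s hs => by simpa using bound s hs.1) t ⟨ht, le_rfl⟩
  rwa [gronwallBound_ε0] at this

theorem stmt7_general (M : ℕ)
    (R : EuclideanSpace ℝ (Fin M) → ℝ)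
    (hconv : ConvexOn ℝ Set.univ R)
    (hR0 : R 0 = 0)
    (g : EuclideanSpace ℝ (Fin M) → EuclideanSpace ℝ (Fin M))
    (hg : ∀ x : EuclideanSpace ℝ (Fin M), HasGradientAt R (g x) x)
    (ψ : ℝ → EuclideanSpace ℝ (Fin M))
    (hgne : ∀ t : ℝ, 0 ≤ t → g (ψ t) ≠ 0)
    (hψ : ∀ t : ℝ, 0 ≤ t → HasDerivAt ψ
      (-((inner ℝ (g (ψ t)) (ψ t) : ℝ) / ‖g (ψ t)‖ ^ 2) • g (ψ t)) t) :
    ∀ t : ℝ, 0 ≤ t → R (ψ t) ≤ R (ψ 0) * Real.exp (-t) := by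
  have hR_le_inner (x : EuclideanSpace ℝ (Fin M)) : R x ≤ inner ℝ (g x) x := by
    have := hconv.add_fderiv_sub_le (mem_univ x) (mem_univ 0) (hg x).hasFDerivAt
    simp only [toDual_apply_apply, zero_sub, inner_neg_right, hR0] at this
    linarith
  have hderiv (s : ℝ) (hs : 0 ≤ s) : HasDerivAt (R ∘ ψ) (-inner ℝ (g (ψ s)) (ψ s)) s := by
    simpa only [real_inner_neg_div_norm_sq_smul_self (hgne s hs)] using
      (hg (ψ s)).comp_hasDerivAt (hψ s hs)
  intro t ht
  simpa using le_mul_exp_of_hasDerivAt_le_mul (K := -1) hderiv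
    (fun s _ => by simpa using hR_le_inner (ψ s)) ht

/-- Exponential decay of a convex functional along the time-rescaled
gradient flow: if `R : ℝ^M → ℝ` is convex, differentiable with gradient
`g = ∇R`, nonnegative with `R(0) = 0`, and `ψ` solves
`ψ' = −(⟨∇R(ψ),ψ⟩/‖∇R(ψ)‖²)·∇R(ψ)` with `∇R(ψ(t)) ≠ 0` on `[0,∞)`,
then `R(ψ(t)) ≤ R(ψ(0)) e^{−t}` for all `t ≥ 0`. -/
theorem stmt7 (M : ℕ) (hM : 1 ≤ M)
    (R : EuclideanSpace ℝ (Fin M) → ℝ)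
    (hconv : ConvexOn ℝ Set.univ R)
    (hR0 : R 0 = 0)
    (hRnonneg : ∀ x : EuclideanSpace ℝ (Fin M), 0 ≤ R x)
    (g : EuclideanSpace ℝ (Fin M) → EuclideanSpace ℝ (Fin M))
    (hg : ∀ x : EuclideanSpace ℝ (Fin M), HasGradientAt R (g x) x)
    (ψ : ℝ → EuclideanSpace ℝ (Fin M))
    (hgne : ∀ t : ℝ, 0 ≤ t → g (ψ t) ≠ 0)
    (hψ : ∀ t : ℝ, 0 ≤ t → HasDerivAt ψ
      (-((inner ℝ (g (ψ t)) (ψ t) : ℝ) / ‖g (ψ t)‖ ^ 2) • g (ψ t)) t) :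
    ∀ t : ℝ, 0 ≤ t → R (ψ t) ≤ R (ψ 0) * Real.exp (-t) :=
  stmt7_general M R hconv hR0 g hg ψ hgne hψ
end

section
/- Let X, Y be real r×N matrices and let F be a symmetric real r×r matrix that minimizes the squared Frobenius norm ‖Y − F'X‖_F² over all symmetric real r×r matrices F'. Then F satisfies the Sylvester equation F·(XXᵀ) + (XXᵀ)·F = XYᵀ + YXᵀ. -/
/-!
Perturbing `F` along a symmetric direction `H`, minimality of `t ↦ ‖Y - (F + tH)X‖_F²` at
`t = 0` forces `⟨Y - FX, HX⟩_F = 0`, i.e. `tr(M H) = 0` for `M = (Y - FX)Xᵀ`. A matrix orthogonal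
to every symmetric matrix is skew (test against `H = M + Mᵀ`), and `M + Mᵀ = 0` is exactly the
Sylvester equation.
-/

open Matrix

lemma eq_zero_of_forall_two_mul_le_sq_mul {a b : ℝ} (h : ∀ t : ℝ, 2 * t * b ≤ t ^ 2 * a) :
    b = 0 := by
  have hc : 0 < |a| + 2 := by positivity
  have h' := h (b / (|a| + 2))
  field_simp at h'
  nlinarith [sq_nonneg b, le_abs_self a, mul_nonneg (sq_nonneg b) (abs_nonneg a)]

namespace Matrix

variable {m n : Type*} [Fintype m] [Fintype n]

theorem trace_mul_transpose_self (A : Matrix m n ℝ) :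
    (A * Aᵀ).trace = ∑ i, ∑ j, A i j ^ 2 := by
  simp [trace, mul_apply, sq]

theorem trace_mul_transpose_sub_smul (A B : Matrix m n ℝ) (t : ℝ) :
    ((A - t • B) * (A - t • B)ᵀ).trace =
      (A * Aᵀ).trace - 2 * t * (A * Bᵀ).trace + t ^ 2 * (B * Bᵀ).trace := by
  have hBA : (B * Aᵀ).trace = (A * Bᵀ).trace := by
    rw [← trace_transpose, transpose_mul, transpose_transpose]
  simp only [transpose_sub, transpose_smul, Matrix.sub_mul, Matrix.mul_sub, Matrix.smul_mul,
    Matrix.mul_smul, trace_sub, trace_smul, hBA, smul_eq_mul]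
  ring

theorem trace_mul_transpose_eq_zero_of_forall_le {A B : Matrix m n ℝ}
    (h : ∀ t : ℝ, (A * Aᵀ).trace ≤ ((A - t • B) * (A - t • B)ᵀ).trace) :
    (A * Bᵀ).trace = 0 :=
  eq_zero_of_forall_two_mul_le_sq_mul fun t => by
    have ht := h t
    rw [trace_mul_transpose_sub_smul] at ht
    linarith

theorem add_transpose_eq_zero_of_forall_isSymm_trace_mul_eq_zero {M : Matrix n n ℝ}
    (h : ∀ H : Matrix n n ℝ, H.IsSymm → (M * H).trace = 0) : M + Mᵀ = 0 := by
  set S := M + Mᵀ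
  have hS : S.IsSymm := by simp [S, IsSymm, add_comm]
  have hMS : (Mᵀ * S).trace = (M * S).trace := by
    conv_lhs => rw [← hS.eq]
    exact trace_transpose_mul M S
  have hSS : (S * Sᴴ).trace = 0 := by
    rw [conjTranspose_eq_transpose_of_trivial, hS.eq]
    calc (S * S).trace = (M * S).trace + (Mᵀ * S).trace := by rw [Matrix.add_mul, trace_add]
      _ = 0 := by rw [hMS, h S hS, add_zero]
  exact trace_mul_conjTranspose_self_eq_zero_iff.mp hSS

end Matrix

/-- Symmetric DMD: a symmetric matrix `F` minimizing the squared Frobenius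
norm `‖Y − F'X‖_F²` over all symmetric matrices `F'` satisfies the
Sylvester equation `F(XXᵀ) + (XXᵀ)F = XYᵀ + YXᵀ`. -/
theorem stmt13 (r N : ℕ) (X Y : Matrix (Fin r) (Fin N) ℝ)
    (F : Matrix (Fin r) (Fin r) ℝ) (hF : F.IsSymm)
    (hmin : ∀ F' : Matrix (Fin r) (Fin r) ℝ, F'.IsSymm →
      ∑ i : Fin r, ∑ j : Fin N, (Y i j - (F * X) i j) ^ 2 ≤
      ∑ i : Fin r, ∑ j : Fin N, (Y i j - (F' * X) i j) ^ 2) :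
    F * (X * Xᵀ) + (X * Xᵀ) * F = X * Yᵀ + Y * Xᵀ := by
  have hcost : ∀ F' : Matrix (Fin r) (Fin r) ℝ,
      ∑ i : Fin r, ∑ j : Fin N, (Y i j - (F' * X) i j) ^ 2 =
        ((Y - F' * X) * (Y - F' * X)ᵀ).trace :=
    fun F' => (trace_mul_transpose_self _).symm
  have horth : ∀ H : Matrix (Fin r) (Fin r) ℝ, H.IsSymm → ((Y - F * X) * Xᵀ * H).trace = 0 := by
    intro H hH
    have hperturb : ∀ t : ℝ, Y - (F + t • H) * X = (Y - F * X) - t • (H * X) := fun t => by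
      rw [Matrix.add_mul, Matrix.smul_mul, sub_add_eq_sub_sub]
    have hzero := trace_mul_transpose_eq_zero_of_forall_le (A := Y - F * X) (B := H * X)
      fun t => by simpa only [hcost, hperturb] using hmin (F + t • H) (hF.add (hH.smul t))
    rwa [transpose_mul, hH.eq, ← Matrix.mul_assoc] at hzero
  have hskew := add_transpose_eq_zero_of_forall_isSymm_trace_mul_eq_zero horth
  rw [transpose_mul, transpose_sub, transpose_mul, transpose_transpose, hF.eq, Matrix.sub_mul,
    Matrix.mul_sub, Matrix.mul_assoc, ← Matrix.mul_assoc X] at hskew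
  rw [← sub_eq_zero, ← neg_eq_zero, ← hskew]
  abel
end

section
/- Fix p ∈ [1,2) and λ < 0, set T = −1/(λ(2−p)), and let a(t) = (1 + λ(2−p)t)^{1/(2−p)} for t ∈ [0,T]. For each integer N ≥ 2 define μ_N = (Σ_{k=1}^{N} a(kT/N) · a((k−1)T/N)) / (Σ_{k=1}^{N} a((k−1)T/N)²). Then lim_{N→∞} μ_N = 1. -/
/-!
The samples are `a(kT/N) = ((N - k)/N)^α` with `α = 1/(2-p)`, so after reversing the order of
summation `μ_N = ∑ u_j u_{j+1} / ∑ u_{j+1}²` for the increasing sequence `u_j = (j/N)^α`.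
Monotonicity sandwiches the numerator between `∑ u_j²` and `∑ u_{j+1}²`, which differ by
`u_N² = 1`, while by the power mean inequality (`2α ≥ 1`) the denominator is at least
`N / 2^(2α)`. Hence `|μ_N - 1| ≤ 2^(2α) / N`.
-/

open Filter Finset

lemma sum_Icc_one_sub_eq_sum_range {M : Type*} [AddCommMonoid M] (N : ℕ) (f : ℝ → M) :
    ∑ k ∈ Icc 1 N, f ((N : ℝ) - k) = ∑ j ∈ range N, f j := by
  refine sum_nbij' (fun k => N - k) (fun j => N - j) ?_ ?_ ?_ ?_ ?_
  all_goals intro k hk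
  all_goals simp only [mem_Icc, mem_range] at hk ⊢
  all_goals try omega
  rw [Nat.cast_sub hk.2]

lemma sum_range_natCast_add_one (N : ℕ) :
    ∑ j ∈ range N, ((j : ℝ) + 1) = N * (N + 1) / 2 := by
  induction N with
  | zero => simp
  | succ n ih => rw [sum_range_succ, ih]; push_cast; ring

lemma div_two_rpow_le_sum_range_rpow {β : ℝ} (hβ : 1 ≤ β) {N : ℕ} (hN : N ≠ 0) :
    N / 2 ^ β ≤ ∑ j ∈ range N, (((j : ℝ) + 1) / N) ^ β := by
  have hNpos : (0 : ℝ) < N := by positivity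
  have jensen := Real.rpow_arith_mean_le_arith_mean_rpow (range N) (fun _ => (1 : ℝ) / N)
    (fun j => ((j : ℝ) + 1) / N) (fun _ _ => by positivity) (by simp [hN])
    (fun _ _ => by positivity) hβ
  simp only [← mul_sum, ← sum_div, sum_range_natCast_add_one] at jensen
  have half_le_mean : (1 / 2 : ℝ) ≤ 1 / N * (N * (N + 1) / 2 / N) := by
    field_simp; linarith
  have := (Real.rpow_le_rpow (by norm_num) half_le_mean (by linarith)).trans jensen
  rwa [Real.div_rpow zero_le_one zero_le_two, Real.one_rpow, one_div_mul_eq_div,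
    le_div_iff₀ hNpos, one_div_mul_eq_div] at this

noncomputable def dmdRatio (u : ℕ → ℝ) (N : ℕ) : ℝ :=
  (∑ j ∈ range N, u j * u (j + 1)) / ∑ j ∈ range N, u (j + 1) ^ 2

lemma abs_dmdRatio_sub_one_le {u : ℕ → ℝ} (hu : Monotone u) (hu0 : 0 ≤ u 0) {N : ℕ}
    (hQ : 0 < ∑ j ∈ range N, u (j + 1) ^ 2) :
    |dmdRatio u N - 1| ≤ u N ^ 2 / ∑ j ∈ range N, u (j + 1) ^ 2 := by
  have nonneg (j : ℕ) : 0 ≤ u j := hu0.trans (hu j.zero_le)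
  have le_sq : ∑ j ∈ range N, u j * u (j + 1) ≤ ∑ j ∈ range N, u (j + 1) ^ 2 :=
    sum_le_sum fun j _ => by
      rw [sq]; exact mul_le_mul_of_nonneg_right (hu j.le_succ) (nonneg _)
  have sq_le : ∑ j ∈ range N, u j ^ 2 ≤ ∑ j ∈ range N, u j * u (j + 1) :=
    sum_le_sum fun j _ => by
      rw [sq]; exact mul_le_mul_of_nonneg_left (hu j.le_succ) (nonneg _)
  have shift : ∑ j ∈ range N, u (j + 1) ^ 2 + u 0 ^ 2 = ∑ j ∈ range N, u j ^ 2 + u N ^ 2 := by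
    rw [← sum_range_succ' (fun j => u j ^ 2), sum_range_succ]
  rw [dmdRatio, abs_sub_comm, abs_of_nonneg (by rw [sub_nonneg, div_le_one hQ]; exact le_sq),
    le_div_iff₀ hQ, sub_mul, one_mul, div_mul_cancel₀ _ hQ.ne']
  nlinarith [sq_nonneg (u 0)]

lemma abs_dmdRatio_div_rpow_sub_one_le {α : ℝ} (hα : 1 ≤ 2 * α) {N : ℕ} (hN : N ≠ 0) :
    |dmdRatio (fun j => ((j : ℝ) / N) ^ α) N - 1| ≤ 2 ^ (2 * α) / N := by
  have hNpos : (0 : ℝ) < N := by positivity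
  have hQ : N / 2 ^ (2 * α) ≤ ∑ j ∈ range N, ((((j + 1 : ℕ) : ℝ) / N) ^ α) ^ 2 := by
    refine (div_two_rpow_le_sum_range_rpow hα hN).trans_eq (sum_congr rfl fun j _ => ?_)
    rw [← Real.rpow_mul_natCast (by positivity)]
    push_cast; ring_nf
  have hQpos := (show (0 : ℝ) < N / 2 ^ (2 * α) by positivity).trans_le hQ
  have hα0 : 0 ≤ α := by linarith
  have := abs_dmdRatio_sub_one_le (u := fun j => ((j : ℝ) / N) ^ α)
    (fun i j hij => by simp only; gcongr) (Real.rpow_nonneg (by positivity) α) hQpos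
  rw [div_self hNpos.ne', Real.one_rpow, one_pow] at this
  refine this.trans ?_
  rwa [one_div_le hQpos (by positivity), one_div_div]

lemma one_add_mul_sample_eq {c T : ℝ} (hc : c ≠ 0) (hT : T = -1 / c) (x : ℝ) {N : ℝ}
    (hN : N ≠ 0) : 1 + c * (x * T / N) = (N - x) / N := by
  subst hT; field_simp; ring

/-- The discrete DMD eigenvalue `μ_N` obtained from `N` uniform samples on
`[0,T]` of the decay profile `a(t) = (1+λ(2−p)t)^{1/(2−p)}`,
`T = −1/(λ(2−p))`, converges to `1` as `N → ∞` (step size `dt → 0`). -/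
theorem stmt16 (p lam T : ℝ) (hp1 : 1 ≤ p) (hp2 : p < 2) (hlam : lam < 0)
    (hT : T = -1 / (lam * (2 - p)))
    (a : ℝ → ℝ) (ha : ∀ t : ℝ, a t = (1 + lam * (2 - p) * t) ^ ((1 : ℝ) / (2 - p)))
    (μ : ℕ → ℝ)
    (hμ : ∀ N : ℕ, μ N =
      (∑ k ∈ Finset.Icc 1 N, a ((k : ℝ) * T / N) * a (((k : ℝ) - 1) * T / N)) /
      (∑ k ∈ Finset.Icc 1 N, (a (((k : ℝ) - 1) * T / N)) ^ 2)) :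
    Tendsto (fun N : ℕ => μ N) atTop (nhds 1) := by
  set α := (1 : ℝ) / (2 - p)
  have hα : 1 ≤ 2 * α := by rw [mul_one_div, le_div_iff₀ (by linarith)]; linarith
  have hc : lam * (2 - p) ≠ 0 := (mul_neg_of_neg_of_pos hlam (by linarith)).ne
  have hμ_eq (N : ℕ) (hN : N ≠ 0) : μ N = dmdRatio (fun j => ((j : ℝ) / N) ^ α) N := by
    have hN' : (N : ℝ) ≠ 0 := by positivity
    simp only [hμ, ha, one_add_mul_sample_eq hc hT _ hN', ← sub_add, dmdRatio]
    push_cast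
    exact congr_arg₂ (· / ·)
      (sum_Icc_one_sub_eq_sum_range N fun x => (x / N) ^ α * ((x + 1) / N) ^ α)
      (sum_Icc_one_sub_eq_sum_range N fun x => (((x + 1) / N) ^ α) ^ 2)
  have bound (N : ℕ) (hN : 1 ≤ N) : ‖μ N - 1‖ ≤ 2 ^ (2 * α) / N := by
    rw [Real.norm_eq_abs, hμ_eq N (by omega)]
    exact abs_dmdRatio_div_rpow_sub_one_le hα (by omega)
  exact tendsto_iff_norm_sub_tendsto_zero.2 <|
    squeeze_zero' (Eventually.of_forall fun _ => norm_nonneg _)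
      (eventually_atTop.2 ⟨1, bound⟩) (tendsto_const_div_atTop_nhds_zero_nat _)
end

section
/- Fix p ∈ [1,2) and λ < 0, set T = −1/(λ(2−p)), and let a(t) = (1 + λ(2−p)t)^{1/(2−p)} for t ∈ [0,T]. Let N ≥ 2 be an integer and dt > 0 with N·dt ≤ T, and define the vectors a = (a(0), a(dt), …, a((N−1)dt)) and b = (a(dt), a(2dt), …, a(N·dt)) in ℝ^N. Then a and b are not colinear; equivalently, the DMD error ‖b‖² − ⟨a, b⟩²/‖a‖² is strictly positive. -/
/-!
A colinear pair `b = c • a` with `a 0 = 1` forces `c = a(dt)` and then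
`a(2dt) = a(dt)²`. Raising to the power `2 - p` turns this into
`1 + 2λ(2-p)dt = (1 + λ(2-p)dt)²`, i.e. `(λ(2-p)dt)² = 0`, which is impossible.
Strict positivity of the DMD error is then the strict Cauchy–Schwarz inequality.
-/

open Real

theorem sq_inner_div_sq_norm_lt_sq_norm {F : Type*} [NormedAddCommGroup F]
    [InnerProductSpace ℝ F] {x y : F} (hx : x ≠ 0) (hxy : ¬ ∃ r : ℝ, y = r • x) :
    inner ℝ x y ^ 2 / ‖x‖ ^ 2 < ‖y‖ ^ 2 := by
  have hlt : |inner ℝ x y| < ‖x‖ * ‖y‖ :=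
    (abs_real_inner_le_norm x y).lt_of_ne fun h =>
      hxy (Or.resolve_left (((norm_inner_eq_norm_tfae ℝ x y).out 0 2).1 h) hx)
  rw [div_lt_iff₀ (by positivity), ← sq_abs]
  calc |inner ℝ x y| ^ 2 < (‖x‖ * ‖y‖) ^ 2 := pow_lt_pow_left₀ hlt (abs_nonneg _) two_ne_zero
    _ = ‖y‖ ^ 2 * ‖x‖ ^ 2 := by ring

theorem not_exists_smul_eq_of_cross_ne {ι : Type*} {u v : EuclideanSpace ℝ ι} {i j : ι}
    (h : v i * u j ≠ v j * u i) : ¬ ∃ c : ℝ, v = c • u := by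
  rintro ⟨c, rfl⟩
  simp only [PiLp.smul_apply, smul_eq_mul] at h
  exact h (by ring)

theorem one_add_mul_nonneg_of_le_neg_one_div {q t : ℝ} (hq : q < 0) (ht : t ≤ -1 / q) :
    0 ≤ 1 + q * t := by
  rw [le_div_iff_of_neg hq] at ht
  linarith

theorem one_add_two_mul_rpow_ne_sq {x r : ℝ} (hx : x ≠ 0) (hr : r ≠ 0) (h : 0 ≤ 1 + 2 * x) :
    (1 + 2 * x) ^ r ≠ ((1 + x) ^ r) ^ 2 := by
  intro heq
  have h1x : 0 ≤ 1 + x := by linarith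
  rw [rpow_pow_comm h1x] at heq
  have hsq : 1 + 2 * x = (1 + x) ^ 2 := rpow_left_injOn hr h (sq_nonneg (1 + x)) heq
  exact hx (pow_eq_zero_iff two_ne_zero |>.1 (by linarith))

theorem stmt17_general (p lam T : ℝ) (hp2 : p < 2) (hlam : lam < 0)
    (hT : T = -1 / (lam * (2 - p)))
    (a : ℝ → ℝ) (ha : ∀ t : ℝ, a t = (1 + lam * (2 - p) * t) ^ ((1 : ℝ) / (2 - p)))
    (N : ℕ) (hN : 2 ≤ N) (dt : ℝ) (hdt : 0 < dt) (hNdt : (N : ℝ) * dt ≤ T)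
    (av bv : EuclideanSpace ℝ (Fin N))
    (hav : ∀ i : Fin N, av i = a ((i : ℝ) * dt))
    (hbv : ∀ i : Fin N, bv i = a (((i : ℝ) + 1) * dt)) :
    (¬ ∃ c : ℝ, bv = c • av) ∧
    0 < ‖bv‖ ^ 2 - (inner ℝ av bv : ℝ) ^ 2 / ‖av‖ ^ 2 := by
  set q := lam * (2 - p)
  have hq : q < 0 := mul_neg_of_neg_of_pos hlam (by linarith)
  have h2dt : 2 * dt ≤ T :=
    le_trans (mul_le_mul_of_nonneg_right (by exact_mod_cast hN) hdt.le) hNdt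
  have hnonneg : 0 ≤ 1 + 2 * (q * dt) := by
    have := one_add_mul_nonneg_of_le_neg_one_div hq (hT ▸ h2dt)
    linarith
  have hav0 : av ⟨0, by omega⟩ = 1 := by simp [hav, ha]
  have hnc : ¬ ∃ c : ℝ, bv = c • av := by
    refine not_exists_smul_eq_of_cross_ne (i := ⟨0, by omega⟩) (j := ⟨1, by omega⟩) ?_
    rw [hav0, hbv, hbv, hav, mul_one]
    norm_num [← sq]
    rw [ha, ha, mul_left_comm]
    exact (one_add_two_mul_rpow_ne_sq (mul_neg_of_neg_of_pos hq hdt).ne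
      (one_div_pos.2 (sub_pos.2 hp2)).ne' hnonneg).symm
  have hav_ne : av ≠ 0 := fun h => by simp [h] at hav0
  exact ⟨hnc, sub_pos.2 (sq_inner_div_sq_norm_lt_sq_norm hav_ne hnc)⟩

/-- Strict positivity of the DMD error for uniform sampling: the vectors of
consecutive uniform samples `a = (a(0),…,a((N−1)dt))` and
`b = (a(dt),…,a(N·dt))` of the decay profile
`a(t) = (1+λ(2−p)t)^{1/(2−p)}` (with `N·dt ≤ T`, `T = −1/(λ(2−p))`) are not
colinear; equivalently the DMD error `‖b‖² − ⟨a,b⟩²/‖a‖²` is strictly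
positive. -/
theorem stmt17 (p lam T : ℝ) (hp1 : 1 ≤ p) (hp2 : p < 2) (hlam : lam < 0)
    (hT : T = -1 / (lam * (2 - p)))
    (a : ℝ → ℝ) (ha : ∀ t : ℝ, a t = (1 + lam * (2 - p) * t) ^ ((1 : ℝ) / (2 - p)))
    (N : ℕ) (hN : 2 ≤ N) (dt : ℝ) (hdt : 0 < dt) (hNdt : (N : ℝ) * dt ≤ T)
    (av bv : EuclideanSpace ℝ (Fin N))
    (hav : ∀ i : Fin N, av i = a ((i : ℝ) * dt))
    (hbv : ∀ i : Fin N, bv i = a (((i : ℝ) + 1) * dt)) :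
    (¬ ∃ c : ℝ, bv = c • av) ∧
    0 < ‖bv‖ ^ 2 - (inner ℝ av bv : ℝ) ^ 2 / ‖av‖ ^ 2 :=
  stmt17_general p lam T hp2 hlam hT a ha N hN dt hdt hNdt av bv hav hbv
end
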